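/- Let n ≥ 3 and let W_n act on ℤ^n via the representation ρ. Then the first group cohomology H¹(W_n, ℤ^n) is isomorphic to ℤ^{n(n−2)} ⊕ (ℤ/2)^n. -/

import Mathlib

/-!
Since `W_n` is the free product of the groups `⟨x̄_i⟩ ≅ C₂`, a 1-cocycle `f` is determined by the
vectors `a_i = f(x̄_i)`, and these can be prescribed freely subject only to
`(1 + ρ(x̄_i)) a_i = 0`, i.e. `(a_i)_i = 0`: the prescribed elements `(a_i, x̄_i)` of `ℤⁿ ⋊ W_n`
are involutions, so they define a section `g ↦ (f g, g)`. The coboundary of `v` takes `x̄_i` to the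
vector with entries `-2 v_j` for `j ≠ i` and `0` at `i`. So `H¹` splits over the columns `j` of the matrix
`(a_i)_j` into the groups `ℤ^{n-1} / 2ℤ(1, …, 1)`, each isomorphic to `ℤ^{n-2} × ℤ/2`: choosing a
reference row `o j ≠ j`, use the coordinates `(a_i)_j - (a_{o j})_j` for `i ∉ {j, o j}` and
`(a_{o j})_j mod 2`.
-/


/-- The relators `x̄_i²` of `W_n`, the free product of `n` copies of `C_2`. -/
def Wrels (n : ℕ) : Set (FreeGroup (Fin n)) :=
  Set.range fun i : Fin n => FreeGroup.of i ^ 2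

/-- The group `W_n = C_2 * ⋯ * C_2` (`n` factors). -/
abbrev W (n : ℕ) : Type := PresentedGroup (Wrels n)

/-- The generators `x̄_1, …, x̄_n` of `W_n`. -/
def xbar (n : ℕ) (i : Fin n) : W n := PresentedGroup.of i

/-- The linear map `diag(-1, …, -1, 1, -1, …, -1)` on `ℤⁿ` (entry `1` in position `i`). -/
def Dmap (n : ℕ) (i : Fin n) : (Fin n → ℤ) →ₗ[ℤ] (Fin n → ℤ) where
  toFun v := fun j => if j = i then v j else -v j
  map_add' u v := by funext j; by_cases h : j = i <;> simp [h] <;> ring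
  map_smul' c v := by funext j; by_cases h : j = i <;> simp [h]

theorem Dmap_sq (n : ℕ) (i : Fin n) : Dmap n i * Dmap n i = 1 := by
  apply LinearMap.ext
  intro v
  funext j
  by_cases h : j = i <;> simp [Dmap, Module.End.mul_apply, h]

/-- `Dmap n i` as a unit of the endomorphism ring, i.e. a linear automorphism. -/
def Dunit (n : ℕ) (i : Fin n) : ((Fin n → ℤ) →ₗ[ℤ] (Fin n → ℤ))ˣ :=
  ⟨Dmap n i, Dmap n i, Dmap_sq n i, Dmap_sq n i⟩

theorem Dunit_sq (n : ℕ) (i : Fin n) : Dunit n i ^ 2 = 1 := by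
  rw [sq]
  exact Units.ext (Dmap_sq n i)

/-- The representation `ρ : W_n → GL_n(ℤ)`, with `ρ(x̄_i) = diag(-1,…,-1,1,-1,…,-1)`. -/
def rho (n : ℕ) : W n →* ((Fin n → ℤ) →ₗ[ℤ] (Fin n → ℤ))ˣ :=
  PresentedGroup.toGroup (f := Dunit n) (by
    rintro r ⟨i, rfl⟩
    simp [Dunit_sq])

theorem rho_of (n : ℕ) (i : Fin n) : rho n (xbar n i) = Dunit n i :=
  PresentedGroup.toGroup.of _

/-- `ρ` as a representation of `W_n` on `ℤⁿ`. -/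
def rep (n : ℕ) : Representation ℤ (W n) (Fin n → ℤ) :=
  (Units.coeHom ((Fin n → ℤ) →ₗ[ℤ] (Fin n → ℤ))).comp (rho n)

universe u

section

variable {k G V : Type u} [CommRing k] [Group G] [AddCommGroup V] [Module k V]

def Representation.toMulAutMultiplicative (ρ : Representation k G V) :
    G →* MulAut (Multiplicative V) where
  toFun g :=
    { toFun := fun x => .ofAdd (ρ g x.toAdd)
      invFun := fun x => .ofAdd (ρ g⁻¹ x.toAdd)
      left_inv := fun x => by simp [← Module.End.mul_apply, ← map_mul]
      right_inv := fun x => by simp [← Module.End.mul_apply, ← map_mul]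
      map_mul' := fun x y => by simp [toAdd_mul, ← ofAdd_add] }
  map_one' := by ext; simp
  map_mul' g h := by ext; simp [Module.End.mul_apply]

namespace groupCohomology

theorem cocycles₁_eq_zero_of_closure_eq_top {A : Rep.{u} k G} {S : Set G}
    (hS : Subgroup.closure S = ⊤) (f : cocycles₁ A) (hf : ∀ g ∈ S, f g = 0) : f = 0 := by
  suffices ∀ g ∈ Subgroup.closure S, f g = 0 from
    cocycles₁_ext fun g => this g (hS ▸ Subgroup.mem_top g)
  intro g hg
  induction hg using Subgroup.closure_induction with
  | mem g hg => exact hf g hg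
  | one => exact cocycles₁_map_one f
  | mul g h _ _ hg hh => rw [(mem_cocycles₁_iff f).1 f.2 g h, hg, hh, map_zero, add_zero]
  | inv g _ hg =>
    have := cocycles₁_map_inv f g⁻¹
    rwa [inv_inv, hg, map_zero, zero_eq_neg] at this

noncomputable def H1LinearEquivOfSurjective {A : Rep.{u} k G} {M : Type u} [AddCommGroup M]
    [Module k M] (φ : cocycles₁ A →ₗ[k] M) (hφ : Function.Surjective φ)
    (hker : LinearMap.ker φ = (coboundaries₁ A).comap (cocycles₁ A).subtype) :
    H1 A ≃ₗ[k] M :=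
  have hπ : LinearMap.ker (H1π A).hom = LinearMap.ker φ := by
    ext f
    rw [LinearMap.mem_ker, H1π_eq_zero_iff, hker]
    rfl
  ((H1π A).hom.quotKerEquivOfSurjective ((ModuleCat.epi_iff_surjective _).1 inferInstance)).symm
    ≪≫ₗ Submodule.quotEquivOfEq _ _ hπ ≪≫ₗ φ.quotKerEquivOfSurjective hφ

theorem mem_cocycles₁_of_section (ρ : Representation k G V)
    (F : G →* Multiplicative V ⋊[ρ.toMulAutMultiplicative] G) (hF : ∀ g, (F g).right = g) :
    (fun g => (F g).left.toAdd) ∈ cocycles₁ (Rep.of ρ) := by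
  rw [mem_cocycles₁_iff]
  intro g h
  rw [map_mul, SemidirectProduct.mul_left, hF, toAdd_mul, add_comm]
  rfl

end groupCohomology

end

section FreeProductOfInvolutions

open groupCohomology

variable {k V : Type} [CommRing k] [AddCommGroup V] [Module k V] {n : ℕ}

theorem xbar_sq (n : ℕ) (i : Fin n) : xbar n i ^ 2 = 1 :=
  PresentedGroup.one_of_mem (rels := Wrels n) ⟨i, rfl⟩

theorem cocycles₁_ext_xbar {ρ : Representation k (W n) V} {f₁ f₂ : cocycles₁ (Rep.of ρ)}
    (h : ∀ i, f₁ (xbar n i) = f₂ (xbar n i)) : f₁ = f₂ := by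
  rw [← sub_eq_zero]
  refine cocycles₁_eq_zero_of_closure_eq_top (PresentedGroup.closure_range_of (Wrels n)) _ ?_
  rintro _ ⟨i, rfl⟩
  exact sub_eq_zero.2 (h i)

theorem cocycles₁_xbar_add_self {ρ : Representation k (W n) V} (f : cocycles₁ (Rep.of ρ))
    (i : Fin n) : ρ (xbar n i) (f (xbar n i)) + f (xbar n i) = 0 := by
  rw [← (mem_cocycles₁_iff f).1 f.2, ← sq, xbar_sq, cocycles₁_map_one]

theorem exists_cocycles₁_xbar (ρ : Representation k (W n) V) (d : Fin n → V)
    (hd : ∀ i, ρ (xbar n i) (d i) + d i = 0) :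
    ∃ f : cocycles₁ (Rep.of ρ), ∀ i, f (xbar n i) = d i := by
  let u : Fin n → Multiplicative V ⋊[ρ.toMulAutMultiplicative] W n :=
    fun i => ⟨.ofAdd (d i), xbar n i⟩
  have hu : ∀ r ∈ Wrels n, FreeGroup.lift u r = 1 := by
    rintro _ ⟨i, rfl⟩
    rw [map_pow, FreeGroup.lift_apply_of, sq]
    ext
    · show Multiplicative.ofAdd (d i + ρ (xbar n i) (d i)) = Multiplicative.ofAdd 0
      rw [add_comm, hd]
    · exact (sq _).symm.trans (xbar_sq n i)
  let F := PresentedGroup.toGroup hu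
  have hF : SemidirectProduct.rightHom.comp F = MonoidHom.id (W n) :=
    PresentedGroup.ext fun i => congrArg SemidirectProduct.right (PresentedGroup.toGroup.of hu)
  refine ⟨⟨_, mem_cocycles₁_of_section ρ F fun g => DFunLike.congr_fun hF g⟩, fun i => ?_⟩
  exact congrArg (fun x => x.left.toAdd) (PresentedGroup.toGroup.of hu)

end FreeProductOfInvolutions

section DiagonalRepresentation

open groupCohomology

variable {n : ℕ}

theorem rep_xbar_apply (i : Fin n) (v : Fin n → ℤ) (j : Fin n) :
    rep n (xbar n i) v j = if j = i then v j else -v j := by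
  rw [rep, MonoidHom.comp_apply, rho_of]
  rfl

theorem rep_xbar_add_self_eq_zero_iff (i : Fin n) (v : Fin n → ℤ) :
    rep n (xbar n i) v + v = 0 ↔ v i = 0 := by
  constructor
  · intro h
    have := congrFun h i
    simp only [Pi.add_apply, rep_xbar_apply, Pi.zero_apply, ite_true] at this
    omega
  · intro h
    funext j
    by_cases hj : j = i <;> simp [rep_xbar_apply, hj, h]

theorem d₀₁_xbar_apply (v : Fin n → ℤ) (i j : Fin n) :
    (d₀₁ (Rep.of (rep n))).hom v (xbar n i) j = if j = i then 0 else -2 * v j := by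
  show rep n (xbar n i) v j - v j = _
  rw [rep_xbar_apply]
  split_ifs <;> ring

variable (o : Fin n → Fin n)

/-- `⟨j, i, _⟩` indexes the free coordinate `f(x̄_i)_j - f(x̄_{o j})_j` of a cocycle `f`. -/
abbrev OffRefPairs : Type := Σ j : Fin n, {i : Fin n // i ≠ j ∧ i ≠ o j}

def cocycleCoords :
    cocycles₁ (Rep.of (rep n)) →ₗ[ℤ] (OffRefPairs o → ℤ) × (Fin n → ZMod 2) :=
  LinearMap.comp (M₂ := W n → Fin n → ℤ)
    { toFun f := (fun t => f (xbar n t.2.1) t.1 - f (xbar n (o t.1)) t.1,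
        fun j => (f (xbar n (o j)) j : ZMod 2))
      map_add' f g := by
        ext <;> simp
        ring
      map_smul' c f := by
        ext <;> simp
        ring }
    (cocycles₁ _).subtype

theorem cocycleCoords_apply (f : cocycles₁ (Rep.of (rep n))) :
    cocycleCoords o f = (fun t => f (xbar n t.2.1) t.1 - f (xbar n (o t.1)) t.1,
      fun j => (f (xbar n (o j)) j : ZMod 2)) :=
  rfl

variable {o}

theorem card_offRefPairs (ho : ∀ j, o j ≠ j) :
    Fintype.card (OffRefPairs o) = n * (n - 2) := by
  have hcol : ∀ j, Fintype.card {i : Fin n // i ≠ j ∧ i ≠ o j} = n - 2 := fun j => by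
    have hfilter : Finset.univ.filter (fun i => i ≠ j ∧ i ≠ o j) = {j, o j}ᶜ := by
      ext
      simp
    rw [Fintype.card_subtype, hfilter, Finset.card_compl, Finset.card_pair (ho j).symm,
      Fintype.card_fin]
  simp [Fintype.card_sigma, hcol]

theorem cocycleCoords_surjective (ho : ∀ j, o j ≠ j) :
    Function.Surjective (cocycleCoords o) := by
  rintro ⟨c, e⟩
  let d : Fin n → Fin n → ℤ := fun i j =>
    if hij : i = j then 0 else if hio : i = o j then (e j).val else (e j).val + c ⟨j, i, hij, hio⟩
  obtain ⟨f, hf⟩ := exists_cocycles₁_xbar (rep n) d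
    fun i => (rep_xbar_add_self_eq_zero_iff i _).2 (dif_pos rfl)
  refine ⟨f, Prod.ext (funext fun t => ?_) (funext fun j => ?_)⟩
  · simp [cocycleCoords_apply, hf, d, t.2.2.1, t.2.2.2, ho t.1]
  · simp [cocycleCoords_apply, hf, d, ho j]

theorem ker_cocycleCoords (ho : ∀ j, o j ≠ j) :
    LinearMap.ker (cocycleCoords o) =
      (coboundaries₁ (Rep.of (rep n))).comap (cocycles₁ _).subtype := by
  ext f
  rw [LinearMap.mem_ker, Submodule.mem_comap, Submodule.coe_subtype]
  constructor
  · intro hf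
    have h_eq : ∀ j i (hij : i ≠ j) (hio : i ≠ o j), f (xbar n i) j = f (xbar n (o j)) j :=
      fun j i hij hio => sub_eq_zero.1 (congrFun (congrArg Prod.fst hf) ⟨j, i, hij, hio⟩)
    have h_even : ∀ j, 2 ∣ f (xbar n (o j)) j := fun j =>
      (ZMod.intCast_zmod_eq_zero_iff_dvd _ 2).1 (congrFun (congrArg Prod.snd hf) j)
    choose m hm using h_even
    -- off the diagonal, `f(x̄_i)_j = f(x̄_{o j})_j = 2 m_j` is the coboundary entry of `-m`
    suffices (⟨_, d₀₁_apply_mem_cocycles₁ (-m)⟩ : cocycles₁ (Rep.of (rep n))) = f from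
      ⟨-m, congrArg Subtype.val this⟩
    refine cocycles₁_ext_xbar fun i => funext fun j => ?_
    show (d₀₁ (Rep.of (rep n))).hom (-m) (xbar n i) j = f (xbar n i) j
    rw [d₀₁_xbar_apply]
    by_cases hji : j = i
    · subst hji
      rw [if_pos rfl, (rep_xbar_add_self_eq_zero_iff j _).1 (cocycles₁_xbar_add_self f j)]
    · rw [if_neg hji]
      by_cases hio : i = o j
      · rw [hio, hm]; simp
      · rw [h_eq j i (Ne.symm hji) hio, hm]; simp
  · rintro ⟨v, hv⟩
    have hf : ∀ i j, f (xbar n i) j = if j = i then 0 else -2 * v j := fun i j => by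
      rw [← d₀₁_xbar_apply, hv]
      rfl
    refine Prod.ext (funext fun t => ?_) (funext fun j => ?_)
    · simp [cocycleCoords_apply, hf, Ne.symm t.2.2.1, (ho t.1).symm]
    · simp only [cocycleCoords_apply, hf, if_neg (ho j).symm]
      exact (ZMod.intCast_zmod_eq_zero_iff_dvd _ 2).2 ⟨-v j, by ring⟩

end DiagonalRepresentation

theorem stmt18 (n : ℕ) (hn : 3 ≤ n) :
    Nonempty (groupCohomology.H1 (Rep.of (rep n)) ≃+
      ((Fin (n * (n - 2)) → ℤ) × (Fin n → ZMod 2))) := by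
  have : Nontrivial (Fin n) := Fin.nontrivial_iff_two_le.2 (by omega)
  choose o ho using fun j : Fin n => exists_ne j
  let e : OffRefPairs o ≃ Fin (n * (n - 2)) := Fintype.equivFinOfCardEq (card_offRefPairs ho)
  exact ⟨(groupCohomology.H1LinearEquivOfSurjective (cocycleCoords o)
    (cocycleCoords_surjective ho) (ker_cocycleCoords ho) ≪≫ₗ
      (LinearEquiv.funCongrLeft ℤ ℤ e.symm).prodCongr (LinearEquiv.refl ℤ _)).toAddEquiv⟩
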